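/- arXiv:1512.02021 — 4 statements merged into one kernel-verified Lean document; each statement's English description precedes it below -/
import Mathlib

section
/- A number λ ∈ ℂ is an eigenvalue of L_{0,U} if and only if J_{23}·z² − (J_{12}+J_{34})·z − J_{14} = 0, where z = e^{iλπ}. -/
open MeasureTheory Complex Filter Finset Set
open scoped ENNReal

noncomputable section

/-- The columns of the 2×4 matrix 𝒰 = (C, D). -/
def ucol (C D : Matrix (Fin 2) (Fin 2) ℂ) : Fin 4 → Fin 2 → ℂ :=
  ![fun r => C r 0, fun r => C r 1, fun r => D r 0, fun r => D r 1]

/-- `Jdet C D i j` : the determinant of the 2×2 matrix formed by columns `i` and `j`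
of the 2×4 matrix 𝒰 = (C, D). -/
def Jdet (C D : Matrix (Fin 2) (Fin 2) ℂ) (i j : Fin 4) : ℂ :=
  ucol C D i 0 * ucol C D j 1 - ucol C D i 1 * ucol C D j 0

/-- The rows of 𝒰 = (C, D) are linearly independent. -/
def RowsIndep (C D : Matrix (Fin 2) (Fin 2) ℂ) : Prop :=
  LinearIndependent ℂ ![fun j => ucol C D j 0, fun j => ucol C D j 1]

/-- The characteristic determinant Δ₀(λ) = det (C + D·diag(e^{iλπ}, e^{-iλπ})). -/
def Delta0 (C D : Matrix (Fin 2) (Fin 2) ℂ) (lam : ℂ) : ℂ :=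
  (C + D * !![Complex.exp (I * lam * (Real.pi : ℂ)), 0; 0,
      Complex.exp (-(I * lam * (Real.pi : ℂ)))]).det

/-- The matrix B = diag(-i, i). -/
def Bmat : Matrix (Fin 2) (Fin 2) ℂ := !![-I, 0; 0, I]

/-- The restriction of Lebesgue measure to [0, π]. -/
def mes : MeasureTheory.Measure ℝ := volume.restrict (Set.Icc (0 : ℝ) Real.pi)

/-- `IsAC y g` : y is absolutely continuous on [0,π] with a.e. derivative g
(i.e. g is integrable on [0,π] and y is the indefinite integral of g there). -/
def IsAC (y g : ℝ → Fin 2 → ℂ) : Prop :=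
  (∀ i, IntervalIntegrable (fun t => g t i) volume 0 Real.pi) ∧
  ∀ x ∈ Set.Icc (0 : ℝ) Real.pi, y x = y 0 + fun i => ∫ t in (0 : ℝ)..x, g t i

/-- λ is an eigenvalue of the Dirac operator L_{Q,U}, where U(y) = C·y(0) + D·y(π),
with eigenfunction y : y is nonzero on [0,π], absolutely continuous, satisfies
B·y′(x) + Q(x)·y(x) = λ·y(x) for a.e. x ∈ [0,π], and U(y) = 0. -/
def IsEigenpair (C D : Matrix (Fin 2) (Fin 2) ℂ) (Q : ℝ → Matrix (Fin 2) (Fin 2) ℂ)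
    (lam : ℂ) (y : ℝ → Fin 2 → ℂ) : Prop :=
  (∃ x ∈ Set.Icc (0 : ℝ) Real.pi, y x ≠ 0) ∧
  ∃ g, IsAC y g ∧
    (∀ᵐ x ∂mes, Bmat.mulVec (g x) + (Q x).mulVec (y x) = lam • y x) ∧
    C.mulVec (y 0) + D.mulVec (y Real.pi) = 0

/-!
Since `B` is diagonal, `B y' = λ y` decouples into the scalar equations `y₁' = iλ y₁` and
`y₂' = -iλ y₂`. An absolutely continuous solution is continuous, hence the primitive of a
continuous function, hence differentiable, and uniqueness for linear ODEs gives
`y x = diag (e^{iλx}, e^{-iλx}) y 0`. The boundary condition thus becomes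
`(C + D diag (z, z⁻¹)) y 0 = 0` with `z = e^{iλπ}`, which has a nonzero solution iff
`Δ₀(λ) = 0`; expanding the determinant, `-z Δ₀(λ)` is exactly the quadratic in `z`, and `z ≠ 0`.
-/

theorem continuousOn_of_eq_add_primitive {f g : ℝ → ℂ} {a b : ℝ}
    (hg : IntervalIntegrable g volume a b)
    (hf : ∀ x ∈ Icc a b, f x = f a + ∫ t in a..x, g t) : ContinuousOn f (Icc a b) := by
  have hprim := intervalIntegral.continuousOn_primitive_interval' hg left_mem_uIcc
  exact (continuousOn_const.add (hprim.mono Icc_subset_uIcc)).congr hf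

theorem hasDerivWithinAt_of_eq_add_primitive {f h : ℝ → ℂ} {a b x : ℝ}
    (hh : ContinuousOn h (Icc a b)) (hf : ∀ x ∈ Icc a b, f x = f a + ∫ t in a..x, h t)
    (hx : x ∈ Icc a b) : HasDerivWithinAt f (h x) (Icc a b) x := by
  have : Fact (x ∈ Icc a b) := ⟨hx⟩
  have hprim := intervalIntegral.integral_hasDerivWithinAt_right (s := Icc a b) (t := Icc a b)
    ((hh.mono (Icc_subset_Icc_right hx.2)).intervalIntegrable_of_Icc hx.1)
    (hh.stronglyMeasurableAtFilter_nhdsWithin measurableSet_Icc x) (hh x hx)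
  exact (hprim.const_add (f a)).congr hf (hf x hx)

theorem eqOn_mul_cexp_of_eq_add_primitive {f g : ℝ → ℂ} {a b : ℝ} {c : ℂ}
    (hg : IntervalIntegrable g volume a b)
    (hf : ∀ x ∈ Icc a b, f x = f a + ∫ t in a..x, g t)
    (hgf : ∀ᵐ t ∂volume.restrict (Icc a b), g t = c * f t) :
    EqOn f (fun x => f a * exp (c * (x - a))) (Icc a b) := by
  have hcont := continuousOn_of_eq_add_primitive hg hf
  have hf' : ∀ x ∈ Icc a b, f x = f a + ∫ t in a..x, c * f t := by
    intro x hx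
    rw [hf x hx, intervalIntegral.integral_congr_ae]
    filter_upwards [(ae_restrict_iff' measurableSet_Icc).mp hgf] with t ht hts
    rw [uIoc_of_le hx.1] at hts
    exact ht ⟨hts.1.le, hts.2.trans hx.2⟩
  have hexp : ∀ x : ℝ, HasDerivAt (fun x : ℝ => f a * exp (c * (x - a)))
      (c * (f a * exp (c * (x - a)))) x := by
    intro x
    have := (((hasDerivAt_id x).ofReal_comp.sub_const (a : ℂ)).const_mul c).cexp.const_mul (f a)
    simp only [id, ofReal_one, mul_one] at this
    exact this.congr_deriv (by ring)
  refine ODE_solution_unique (v := fun _ y => c • y) (fun _ => lipschitzWith_smul c) hcont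
    (fun x hx => ?_) (continuous_iff_continuousAt.2 fun x => (hexp x).continuousAt).continuousOn
    (fun x _ => (hexp x).hasDerivWithinAt) (by simp)
  exact (hasDerivWithinAt_of_eq_add_primitive (continuousOn_const.mul hcont) hf'
    (Ico_subset_Icc_self hx)).mono_of_mem_nhdsWithin (Icc_mem_nhdsGE_of_mem hx)

open scoped Matrix

/-- `exp (λ x B⁻¹)`, the fundamental matrix of `B y' = λ y`. -/
def fundamentalMatrix (lam : ℂ) (x : ℝ) : Matrix (Fin 2) (Fin 2) ℂ :=
  !![exp (I * lam * x), 0; 0, exp (-(I * lam * x))]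

theorem Delta0_eq_det_fundamentalMatrix (C D : Matrix (Fin 2) (Fin 2) ℂ) (lam : ℂ) :
    Delta0 C D lam = (C + D * fundamentalMatrix lam Real.pi).det := rfl

theorem fundamentalMatrix_mulVec (lam : ℂ) (x : ℝ) (v : Fin 2 → ℂ) :
    fundamentalMatrix lam x *ᵥ v = ![exp (I * lam * x) * v 0, exp (-(I * lam * x)) * v 1] := by
  ext i; fin_cases i <;> simp [fundamentalMatrix, Matrix.mulVec, dotProduct]

theorem fundamentalMatrix_zero (lam : ℂ) : fundamentalMatrix lam 0 = 1 := by
  simp [fundamentalMatrix, Matrix.one_fin_two]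

theorem continuous_fundamentalMatrix (lam : ℂ) : Continuous (fundamentalMatrix lam) := by
  unfold fundamentalMatrix; fun_prop

theorem hasDerivAt_fundamentalMatrix_mulVec (lam : ℂ) (v : Fin 2 → ℂ) (x : ℝ) :
    HasDerivAt (fun x => fundamentalMatrix lam x *ᵥ v)
      (fundamentalMatrix lam x *ᵥ ![I * lam * v 0, -(I * lam) * v 1]) x := by
  have hlin : HasDerivAt (fun x : ℝ => I * lam * x) (I * lam) x := by
    simpa using ((hasDerivAt_id x).ofReal_comp).const_mul (I * lam)
  simp only [fundamentalMatrix_mulVec, hasDerivAt_pi, Fin.forall_fin_two, Matrix.cons_val_zero,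
    Matrix.cons_val_one]
  exact ⟨(hlin.cexp.mul_const (v 0)).congr_deriv (by ring),
    (hlin.neg.cexp.mul_const (v 1)).congr_deriv (by rw [Pi.neg_apply]; ring)⟩

theorem Bmat_mulVec_eq_smul_iff {g v : Fin 2 → ℂ} {lam : ℂ} :
    Bmat *ᵥ g = lam • v ↔ g 0 = I * lam * v 0 ∧ g 1 = -(I * lam) * v 1 := by
  simp only [funext_iff, Fin.forall_fin_two, Bmat, Matrix.mulVec, dotProduct, Fin.sum_univ_two,
    Matrix.of_apply, Matrix.cons_val', Matrix.cons_val_zero, Matrix.cons_val_one,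
    Matrix.cons_val_fin_one, Pi.smul_apply, smul_eq_mul, zero_mul, add_zero, zero_add, neg_mul]
  constructor <;> rintro ⟨h0, h1⟩
  · exact ⟨by linear_combination I * h0 + g 0 * I_sq, by linear_combination -I * h1 + g 1 * I_sq⟩
  · exact ⟨by linear_combination -I * h0 - lam * v 0 * I_sq,
      by linear_combination I * h1 - lam * v 1 * I_sq⟩

theorem isAC_of_hasDerivAt {y g : ℝ → Fin 2 → ℂ} (hy : ∀ x, HasDerivAt y (g x) x)
    (hg : Continuous g) : IsAC y g := by
  have hint : ∀ i a b, IntervalIntegrable (fun t => g t i) volume a b :=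
    fun i _ _ => ((continuous_apply i).comp hg).intervalIntegrable _ _
  refine ⟨fun i => hint i 0 Real.pi, fun x _ => funext fun i => ?_⟩
  rw [Pi.add_apply, intervalIntegral.integral_eq_sub_of_hasDerivAt
    (fun t _ => hasDerivAt_pi.1 (hy t) i) (hint i 0 x), add_sub_cancel]

theorem eq_fundamentalMatrix_mulVec_of_isAC {y g : ℝ → Fin 2 → ℂ} {lam : ℂ} (hy : IsAC y g)
    (hyg : ∀ᵐ x ∂mes, Bmat *ᵥ g x = lam • y x) :
    ∀ x ∈ Icc 0 Real.pi, y x = fundamentalMatrix lam x *ᵥ y 0 := by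
  obtain ⟨hint, hprim⟩ := hy
  have hcomp : ∀ i, ∀ x ∈ Icc 0 Real.pi, y x i = y 0 i + ∫ t in (0 : ℝ)..x, g t i :=
    fun i x hx => congrFun (hprim x hx) i
  have hyg' : ∀ᵐ x ∂volume.restrict (Icc 0 Real.pi),
      g x 0 = I * lam * y x 0 ∧ g x 1 = -(I * lam) * y x 1 :=
    hyg.mono fun _ h => Bmat_mulVec_eq_smul_iff.1 h
  have h0 := eqOn_mul_cexp_of_eq_add_primitive (hint 0) (hcomp 0) (hyg'.mono fun _ h => h.1)
  have h1 := eqOn_mul_cexp_of_eq_add_primitive (hint 1) (hcomp 1) (hyg'.mono fun _ h => h.2)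
  intro x hx
  rw [fundamentalMatrix_mulVec]
  ext i; fin_cases i
  · simp [h0 hx, mul_comm]
  · simp [h1 hx, mul_comm]

theorem exists_isEigenpair_zero_iff (C D : Matrix (Fin 2) (Fin 2) ℂ) (lam : ℂ) :
    (∃ y, IsEigenpair C D (fun _ => 0) lam y) ↔ Delta0 C D lam = 0 := by
  have hbdry : ∀ v, (C + D * fundamentalMatrix lam Real.pi) *ᵥ v =
      C *ᵥ v + D *ᵥ (fundamentalMatrix lam Real.pi *ᵥ v) := fun v => by
    rw [Matrix.add_mulVec, Matrix.mulVec_mulVec]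
  rw [Delta0_eq_det_fundamentalMatrix, ← Matrix.exists_mulVec_eq_zero_iff]
  constructor
  · rintro ⟨y, ⟨x₀, hx₀, hyx₀⟩, g, hy, hyg, hbc⟩
    have hsol := eq_fundamentalMatrix_mulVec_of_isAC hy (by simpa using hyg)
    refine ⟨y 0, fun h => hyx₀ ?_, ?_⟩
    · rw [hsol x₀ hx₀, h, Matrix.mulVec_zero]
    · rw [hbdry, ← hsol Real.pi ⟨Real.pi_pos.le, le_rfl⟩, hbc]
  · rintro ⟨v, hv, hMv⟩
    refine ⟨fun x => fundamentalMatrix lam x *ᵥ v,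
      ⟨0, ⟨le_rfl, Real.pi_pos.le⟩, by simpa [fundamentalMatrix_zero]⟩, _,
      isAC_of_hasDerivAt (hasDerivAt_fundamentalMatrix_mulVec lam v)
        ((continuous_fundamentalMatrix lam).matrix_mulVec continuous_const),
      ae_of_all _ fun x => ?_, ?_⟩
    · rw [Matrix.zero_mulVec, add_zero, Bmat_mulVec_eq_smul_iff]
      simp only [fundamentalMatrix_mulVec, Matrix.cons_val_zero, Matrix.cons_val_one]
      constructor <;> ring
    · simpa [fundamentalMatrix_zero, hbdry] using hMv

theorem quadratic_eq_neg_mul_det (C D : Matrix (Fin 2) (Fin 2) ℂ) {z w : ℂ} (hzw : z * w = 1) :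
    Jdet C D 1 2 * z ^ 2 - (Jdet C D 0 1 + Jdet C D 2 3) * z - Jdet C D 0 3 =
      -z * (C + D * !![z, 0; 0, w]).det := by
  simp only [Jdet, ucol, Matrix.cons_val', Matrix.cons_val_fin_one, Matrix.cons_val_one,
    Matrix.cons_val_zero, Matrix.cons_val, Matrix.det_fin_two, Matrix.add_apply, Matrix.mul_apply,
    Matrix.of_apply, Fin.sum_univ_two, mul_zero, add_zero, zero_add]
  linear_combination ((D 0 0 * D 1 1 - D 1 0 * D 0 1) * z + (C 0 0 * D 1 1 - C 1 0 * D 0 1)) * hzw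

theorem eigenvalue_iff_quadratic_root_general (C D : Matrix (Fin 2) (Fin 2) ℂ)
    (lam : ℂ) :
    (∃ y : ℝ → Fin 2 → ℂ, IsEigenpair C D (fun _ => 0) lam y) ↔
      Jdet C D 1 2 * Complex.exp (I * lam * (Real.pi : ℂ)) ^ 2 -
        (Jdet C D 0 1 + Jdet C D 2 3) * Complex.exp (I * lam * (Real.pi : ℂ)) -
        Jdet C D 0 3 = 0 := by
  have hzw : exp (I * lam * Real.pi) * exp (-(I * lam * Real.pi)) = 1 := by
    rw [← exp_add, add_neg_cancel, exp_zero]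
  rw [exists_isEigenpair_zero_iff, quadratic_eq_neg_mul_det C D hzw, mul_eq_zero,
    or_iff_right (neg_ne_zero.2 (exp_ne_zero _))]
  rfl

/-- λ ∈ ℂ is an eigenvalue of L_{0,U} if and only if
J₂₃·z² − (J₁₂+J₃₄)·z − J₁₄ = 0 where z = e^{iλπ}. -/
theorem eigenvalue_iff_quadratic_root (C D : Matrix (Fin 2) (Fin 2) ℂ)
    (hU : RowsIndep C D) (lam : ℂ) :
    (∃ y : ℝ → Fin 2 → ℂ, IsEigenpair C D (fun _ => 0) lam y) ↔
      Jdet C D 1 2 * Complex.exp (I * lam * (Real.pi : ℂ)) ^ 2 -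
        (Jdet C D 0 1 + Jdet C D 2 3) * Complex.exp (I * lam * (Real.pi : ℂ)) -
        Jdet C D 0 3 = 0 :=
  eigenvalue_iff_quadratic_root_general C D lam

end
end

section
/- If the boundary conditions are regular, i.e. J_{14}·J_{23} ≠ 0, then there exist constants a ≥ 1 and c > 0, depending only on C and D, such that |Δ0(λ)| ≥ c·e^{π·|Im λ|} for every λ ∈ ℂ with |Im λ| ≥ a. -/
open MeasureTheory Complex Filter Finset Set
open scoped ENNReal

noncomputable section

/-! Expanding the determinant, `Δ₀(λ) = J₁₂ + J₃₄ + J₁₄ e^{-iλπ} - J₂₃ e^{iλπ}`. For `Im λ ≥ 0`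
the term `J₁₄ e^{-iλπ}` has modulus `|J₁₄| e^{π Im λ}` while the rest stays bounded, and for
`Im λ ≤ 0` the term `J₂₃ e^{iλπ}` dominates in the same way. Regularity `J₁₄ J₂₃ ≠ 0` makes both
leading coefficients nonzero, so `|Δ₀(λ)| ≥ min(|J₁₄|, |J₂₃|) e^{π|Im λ|} - const`, which is at
least half the leading term once `|Im λ|` is large. -/

def expPoly (A p q : ℂ) (lam : ℂ) : ℂ :=
  A + p * Complex.exp (-(I * lam * Real.pi)) + q * Complex.exp (I * lam * Real.pi)

lemma Delta0_eq_expPoly (C D : Matrix (Fin 2) (Fin 2) ℂ) :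
    Delta0 C D = expPoly (Jdet C D 0 1 + Jdet C D 2 3) (Jdet C D 0 3) (-Jdet C D 1 2) := by
  funext lam
  have hexp : Complex.exp (I * lam * Real.pi) * Complex.exp (-(I * lam * Real.pi)) = 1 := by
    rw [← Complex.exp_add, add_neg_cancel, Complex.exp_zero]
  simp only [Delta0, expPoly, Jdet, ucol, Matrix.det_fin_two, Matrix.add_apply, Matrix.mul_apply,
    Fin.sum_univ_two, Matrix.of_apply, Matrix.cons_val', Matrix.cons_val_zero, Matrix.cons_val_one,
    Matrix.cons_val_two, Matrix.cons_val_three, Matrix.cons_val_fin_one, Matrix.empty_val',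
    Matrix.head_cons, Matrix.tail_cons, Matrix.head_fin_const]
  linear_combination (D 0 0 * D 1 1 - D 0 1 * D 1 0) * hexp

lemma norm_exp_I_mul_mul_pi (lam : ℂ) :
    ‖Complex.exp (I * lam * Real.pi)‖ = Real.exp (-(Real.pi * lam.im)) := by
  rw [Complex.norm_exp]
  simp [Complex.mul_re, mul_comm]

lemma norm_exp_neg_I_mul_mul_pi (lam : ℂ) :
    ‖Complex.exp (-(I * lam * Real.pi))‖ = Real.exp (Real.pi * lam.im) := by
  rw [Complex.norm_exp]
  simp [Complex.mul_re, mul_comm]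

lemma expPoly_neg (A p q lam : ℂ) : expPoly A p q (-lam) = expPoly A q p lam := by
  simp only [expPoly, mul_neg, neg_mul, neg_neg]
  ring

lemma sub_le_norm_expPoly_of_im_nonneg (A p q : ℂ) {lam : ℂ} (hlam : 0 ≤ lam.im) :
    ‖p‖ * Real.exp (Real.pi * lam.im) - (‖A‖ + ‖q‖) ≤ ‖expPoly A p q lam‖ := by
  have hdecay : Real.exp (-(Real.pi * lam.im)) ≤ 1 :=
    Real.exp_le_one_iff.mpr (neg_nonpos.mpr (mul_nonneg Real.pi_pos.le hlam))
  have hrest : ‖A + q * Complex.exp (I * lam * Real.pi)‖ ≤ ‖A‖ + ‖q‖ := by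
    refine (norm_add_le _ _).trans ?_
    rw [norm_mul, norm_exp_I_mul_mul_pi]
    gcongr
    exact mul_le_of_le_one_right (norm_nonneg q) hdecay
  have hsplit : expPoly A p q lam
      = p * Complex.exp (-(I * lam * Real.pi)) - -(A + q * Complex.exp (I * lam * Real.pi)) := by
    rw [expPoly]; ring
  calc ‖p‖ * Real.exp (Real.pi * lam.im) - (‖A‖ + ‖q‖)
      ≤ ‖p * Complex.exp (-(I * lam * Real.pi))‖
          - ‖-(A + q * Complex.exp (I * lam * Real.pi))‖ := by
        rw [norm_mul, norm_exp_neg_I_mul_mul_pi, norm_neg]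
        linarith
    _ ≤ ‖expPoly A p q lam‖ := hsplit ▸ norm_sub_norm_le _ _

lemma sub_le_norm_expPoly (A p q lam : ℂ) :
    min ‖p‖ ‖q‖ * Real.exp (Real.pi * |lam.im|) - (‖A‖ + ‖p‖ + ‖q‖)
      ≤ ‖expPoly A p q lam‖ := by
  rcases le_or_gt 0 lam.im with him | him
  · have := sub_le_norm_expPoly_of_im_nonneg A p q him
    rw [abs_of_nonneg him]
    linarith [mul_le_mul_of_nonneg_right (min_le_left ‖p‖ ‖q‖) (Real.exp_pos (Real.pi * lam.im)).le,
      norm_nonneg p]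
  · have := sub_le_norm_expPoly_of_im_nonneg A q p (lam := -lam) (by simpa using him.le)
    rw [expPoly_neg, Complex.neg_im] at this
    rw [abs_of_neg him]
    linarith [norm_nonneg q,
      mul_le_mul_of_nonneg_right (min_le_right ‖p‖ ‖q‖) (Real.exp_pos (Real.pi * -lam.im)).le]

lemma exists_half_le_mul_exp_sub {m : ℝ} (hm : 0 < m) (B : ℝ) :
    ∃ a ≥ (1 : ℝ), ∀ t, a ≤ t →
      m / 2 * Real.exp (Real.pi * t) ≤ m * Real.exp (Real.pi * t) - B := by
  refine ⟨max 1 (2 * B / m), le_max_left _ _, fun t ht => ?_⟩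
  have ht_le_exp : t ≤ Real.exp (Real.pi * t) := by
    have ht0 : 0 ≤ t := (zero_le_one.trans (le_max_left _ _)).trans ht
    nlinarith [Real.add_one_le_exp (Real.pi * t), Real.pi_gt_three]
  have : 2 * B / m ≤ Real.exp (Real.pi * t) := ((le_max_right _ _).trans ht).trans ht_le_exp
  rw [div_le_iff₀ hm] at this
  linarith

theorem delta0_lower_bound_general (C D : Matrix (Fin 2) (Fin 2) ℂ)
    (hreg : Jdet C D 0 3 * Jdet C D 1 2 ≠ 0) :
    ∃ a ≥ (1 : ℝ), ∃ c > (0 : ℝ), ∀ lam : ℂ, a ≤ |lam.im| →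
      c * Real.exp (Real.pi * |lam.im|) ≤ ‖Delta0 C D lam‖ := by
  obtain ⟨h14, h23⟩ := mul_ne_zero_iff.mp hreg
  set m := min ‖Jdet C D 0 3‖ ‖-Jdet C D 1 2‖
  have hm : 0 < m := lt_min (norm_pos_iff.mpr h14) (norm_pos_iff.mpr (neg_ne_zero.mpr h23))
  obtain ⟨a, ha1, ha⟩ := exists_half_le_mul_exp_sub hm
    (‖Jdet C D 0 1 + Jdet C D 2 3‖ + ‖Jdet C D 0 3‖ + ‖-Jdet C D 1 2‖)
  refine ⟨a, ha1, m / 2, half_pos hm, fun lam hlam => ?_⟩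
  rw [Delta0_eq_expPoly]
  exact (ha _ hlam).trans (sub_le_norm_expPoly _ _ _ lam)

/-- for regular boundary conditions there exist a ≥ 1 and c > 0
(depending only on C and D) with |Δ₀(λ)| ≥ c·e^{π|Im λ|} whenever |Im λ| ≥ a. -/
theorem delta0_lower_bound (C D : Matrix (Fin 2) (Fin 2) ℂ) (hU : RowsIndep C D)
    (hreg : Jdet C D 0 3 * Jdet C D 1 2 ≠ 0) :
    ∃ a ≥ (1 : ℝ), ∃ c > (0 : ℝ), ∀ lam : ℂ, a ≤ |lam.im| →
      c * Real.exp (Real.pi * |lam.im|) ≤ ‖Delta0 C D lam‖ :=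
  delta0_lower_bound_general C D hreg

end
end

section
/- Let 1 ≤ μ ≤ ν ≤ ∞ and d > 0, and let K : [0,π]² → ℂ be measurable with |K(x,t)| ≤ e^{−d·x}·e^{−d·(π−t)} for a.e. (x,t). Then there is a constant C depending only on μ and ν such that for every f ∈ L_μ[0,π] one has ‖∫₀^π K(·,t)·f(t) dt‖_{L_ν[0,π]} ≤ C·d^{−1 + 1/μ − 1/ν}·‖f‖_{L_μ[0,π]}. -/
/-!
The kernel is dominated by the separable majorant `e^{-dx} e^{-d(π-t)}`, so Hölder's
inequality in `t` gives `|Tf(x)| ≤ e^{-dx} ‖e^{-d(π-·)}‖_{μ'} ‖f‖_μ` with `1/μ' = 1 - 1/μ`,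
hence `‖Tf‖_ν ≤ ‖e^{-d·}‖_ν ‖e^{-d(π-·)}‖_{μ'} ‖f‖_μ`. A function with values in `[0, 1]`
has `‖w‖_p ≤ ‖w‖_1^{1/p}` for `p ≥ 1`, and both exponentials have `L¹` norm at most `1/d`
on `[0, π]`, so the two weights contribute `d^{-1/ν}` and `d^{-1 + 1/μ}`, and `C = 1` works.
-/

open MeasureTheory Complex Filter Set
open scoped ENNReal

noncomputable section

section

variable {α β : Type*} [MeasurableSpace α] [MeasurableSpace β] {μ : Measure α} {ν : Measure β}

theorem eLpNorm_le_eLpNorm_one_rpow_of_enorm_le_one {E : Type*} [NormedAddCommGroup E]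
    {f : α → E} {p : ℝ≥0∞} (hp : 1 ≤ p) (hf : ∀ᵐ x ∂μ, ‖f x‖ₑ ≤ 1) :
    eLpNorm f p μ ≤ eLpNorm f 1 μ ^ p⁻¹.toReal := by
  rcases eq_or_ne p ∞ with rfl | hp_top
  · simpa using eLpNormEssSup_le_of_ae_enorm_bound hf
  have hp0 : p ≠ 0 := (zero_lt_one.trans_le hp).ne'
  have hq : 1 ≤ p.toReal := by simpa using ENNReal.toReal_mono hp_top hp
  rw [eLpNorm_eq_lintegral_rpow_enorm_toReal hp0 hp_top, eLpNorm_one_eq_lintegral_enorm,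
    ENNReal.toReal_inv, ← one_div]
  gcongr ?_ ^ _
  exact lintegral_mono_ae (hf.mono fun x hx => ENNReal.rpow_le_self_of_le_one hx hq)

theorem eLpNorm_integral_mul_le_of_norm_le_mul {A : Type*} [NormedRing A] [NormedSpace ℝ A]
    [SFinite ν] {K : α → β → A} {u : α → ℝ} {v : β → ℝ} {f : β → A} {p q q' : ℝ≥0∞}
    [q'.HolderConjugate q] (hK : ∀ᵐ z ∂μ.prod ν, ‖K z.1 z.2‖ ≤ u z.1 * v z.2)
    (hu : AEStronglyMeasurable u μ) (hv : AEStronglyMeasurable v ν)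
    (hf : AEStronglyMeasurable f ν) :
    eLpNorm (fun x => ∫ t, K x t * f t ∂ν) p μ ≤
      eLpNorm u p μ * (eLpNorm v q' ν * eLpNorm f q ν) := by
  set B := ∫⁻ t, ‖v t‖ₑ * ‖f t‖ₑ ∂ν
  have hpointwise : ∀ᵐ x ∂μ, ‖∫ t, K x t * f t ∂ν‖ₑ ≤ B * ‖u x‖ₑ := by
    filter_upwards [Measure.ae_ae_of_ae_prod hK] with x hx
    calc ‖∫ t, K x t * f t ∂ν‖ₑ
        ≤ ∫⁻ t, ‖K x t * f t‖ₑ ∂ν := enorm_integral_le_lintegral_enorm _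
      _ ≤ ∫⁻ t, ‖u x‖ₑ * (‖v t‖ₑ * ‖f t‖ₑ) ∂ν := by
        refine lintegral_mono_ae (hx.mono fun t ht => ?_)
        have hnorm : ‖K x t * f t‖ ≤ ‖(u x * v t) • f t‖ := by
          rw [norm_smul, Real.norm_eq_abs]
          exact norm_mul_le_of_le (ht.trans (le_abs_self _)) le_rfl
        rw [← mul_assoc, ← enorm_mul, ← enorm_smul]
        exact enorm_le_iff_norm_le.mpr hnorm
      _ = B * ‖u x‖ₑ := by rw [lintegral_const_mul' _ _ enorm_ne_top, mul_comm]
  have hHolder : B ≤ eLpNorm v q' ν * eLpNorm f q ν := by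
    calc B = eLpNorm (v • f) 1 ν := by
          simp only [B, eLpNorm_one_eq_lintegral_enorm, Pi.smul_apply', enorm_smul]
      _ ≤ eLpNorm v q' ν * eLpNorm f q ν := eLpNorm_smul_le_mul_eLpNorm hf hv
  calc eLpNorm (fun x => ∫ t, K x t * f t ∂ν) p μ ≤ B * eLpNorm u p μ :=
        eLpNorm_le_mul_eLpNorm_of_ae_le_mul'' p hu hpointwise
    _ ≤ eLpNorm u p μ * (eLpNorm v q' ν * eLpNorm f q ν) := by
        rw [mul_comm]; gcongr

end

instance : SFinite mes := inferInstanceAs (SFinite (volume.restrict _))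

theorem volume_restrict_Icc_prod_Icc :
    volume.restrict (Icc (0 : ℝ) Real.pi ×ˢ Icc (0 : ℝ) Real.pi) = mes.prod mes := by
  rw [mes, Measure.prod_restrict, ← Measure.volume_eq_prod]

theorem intervalIntegral_eq_integral_mes {E : Type*} [NormedAddCommGroup E] [NormedSpace ℝ E]
    (g : ℝ → E) : ∫ t in (0 : ℝ)..Real.pi, g t = ∫ t, g t ∂mes := by
  rw [intervalIntegral.integral_of_le Real.pi_pos.le, mes, integral_Icc_eq_integral_Ioc]

theorem measurePreserving_pi_sub_mes : MeasurePreserving (fun t => Real.pi - t) mes mes := by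
  have := (Measure.measurePreserving_sub_left volume Real.pi).restrict_preimage
    (measurableSet_Icc (a := (0 : ℝ)) (b := Real.pi))
  simpa [mes] using this

theorem eLpNorm_one_exp_neg_mul_Ioi {d : ℝ} (hd : 0 < d) :
    eLpNorm (fun x => Real.exp (-d * x)) 1 (volume.restrict (Ioi 0)) = ENNReal.ofReal d⁻¹ := by
  have hint := integrableOn_exp_mul_Ioi (neg_lt_zero.mpr hd) 0
  rw [eLpNorm_one_eq_lintegral_enorm, ← ofReal_integral_norm_eq_lintegral_enorm hint]
  simp_rw [Real.norm_eq_abs, abs_of_pos (Real.exp_pos _)]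
  rw [integral_exp_mul_Ioi (neg_lt_zero.mpr hd)]
  simp

theorem eLpNorm_exp_neg_mul_le {d : ℝ} (hd : 0 < d) {p : ℝ≥0∞} (hp : 1 ≤ p) :
    eLpNorm (fun x => Real.exp (-d * x)) p mes ≤ ENNReal.ofReal (d ^ (-p⁻¹.toReal)) := by
  have hle_one : ∀ᵐ x ∂mes, ‖Real.exp (-d * x)‖ₑ ≤ 1 := by
    rw [mes, ae_restrict_iff' measurableSet_Icc]
    refine .of_forall fun x hx => ?_
    rw [← ofReal_norm, Real.norm_of_nonneg (Real.exp_pos _).le, ENNReal.ofReal_le_one]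
    exact Real.exp_le_one_iff.mpr (by nlinarith [hx.1])
  have hmes_le : mes ≤ volume.restrict (Ioi 0) := by
    rw [mes, Measure.restrict_congr_set Ioc_ae_eq_Icc.symm]
    exact Measure.restrict_mono Ioc_subset_Ioi_self le_rfl
  calc eLpNorm (fun x => Real.exp (-d * x)) p mes
      ≤ eLpNorm (fun x => Real.exp (-d * x)) 1 mes ^ p⁻¹.toReal :=
        eLpNorm_le_eLpNorm_one_rpow_of_enorm_le_one hp hle_one
    _ ≤ ENNReal.ofReal d⁻¹ ^ p⁻¹.toReal := by
        gcongr
        exact (eLpNorm_mono_measure _ hmes_le).trans (eLpNorm_one_exp_neg_mul_Ioi hd).le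
    _ = ENNReal.ofReal (d ^ (-p⁻¹.toReal)) := by
        rw [ENNReal.ofReal_rpow_of_pos (inv_pos.mpr hd), Real.inv_rpow hd.le, Real.rpow_neg hd.le]

theorem eLpNorm_exp_neg_mul_pi_sub_le {d : ℝ} (hd : 0 < d) {p : ℝ≥0∞} (hp : 1 ≤ p) :
    eLpNorm (fun t => Real.exp (-d * (Real.pi - t))) p mes ≤
      ENNReal.ofReal (d ^ (-p⁻¹.toReal)) := by
  have hmeas : AEStronglyMeasurable (fun x => Real.exp (-d * x)) mes := by fun_prop
  exact (eLpNorm_comp_measurePreserving hmeas measurePreserving_pi_sub_mes).trans_le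
    (eLpNorm_exp_neg_mul_le hd hp)

/-- for 1 ≤ μ ≤ ν ≤ ∞ there is a constant C > 0, depending only on μ and ν,
such that for every d > 0 and every measurable kernel K on [0,π]² with
|K(x,t)| ≤ e^{−dx}·e^{−d(π−t)} a.e., the operator f ↦ ∫₀^π K(·,t) f(t) dt maps L_μ[0,π] to
L_ν[0,π] with norm at most C·d^{−1+1/μ−1/ν}. -/
theorem exp_product_kernel_estimate (mu nu : ℝ≥0∞) (hmu : 1 ≤ mu) (hmunu : mu ≤ nu) :
    ∃ C > (0 : ℝ), ∀ d : ℝ, 0 < d →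
      ∀ K : ℝ → ℝ → ℂ, Measurable (fun p : ℝ × ℝ => K p.1 p.2) →
        (∀ᵐ p : ℝ × ℝ ∂(volume.restrict (Set.Icc (0:ℝ) Real.pi ×ˢ Set.Icc (0:ℝ) Real.pi)),
          ‖K p.1 p.2‖ ≤ Real.exp (-d * p.1) * Real.exp (-d * (Real.pi - p.2))) →
        ∀ f : ℝ → ℂ, MeasureTheory.MemLp f mu mes →
          eLpNorm (fun x => ∫ t in (0:ℝ)..Real.pi, K x t * f t) nu mes ≤
            ENNReal.ofReal (C * d ^ (-1 + mu⁻¹.toReal - nu⁻¹.toReal)) * eLpNorm f mu mes := by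
  refine ⟨1, one_pos, fun d hd K _ hK f hf => ?_⟩
  set mu' := (1 - mu⁻¹)⁻¹
  have hconj : mu'.HolderConjugate mu := (ENNReal.HolderConjugate.inv_one_sub_inv' hmu).symm
  have hexponent : -mu'⁻¹.toReal = -1 + mu⁻¹.toReal := by
    rw [inv_inv, ENNReal.toReal_sub_of_le (ENNReal.inv_le_one.mpr hmu) ENNReal.one_ne_top,
      ENNReal.toReal_one]
    ring
  rw [volume_restrict_Icc_prod_Icc] at hK
  simp_rw [intervalIntegral_eq_integral_mes]
  calc eLpNorm (fun x => ∫ t, K x t * f t ∂mes) nu mes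
      ≤ eLpNorm (fun x => Real.exp (-d * x)) nu mes *
          (eLpNorm (fun t => Real.exp (-d * (Real.pi - t))) mu' mes * eLpNorm f mu mes) :=
        eLpNorm_integral_mul_le_of_norm_le_mul hK (by fun_prop) (by fun_prop) hf.1
    _ ≤ ENNReal.ofReal (d ^ (-nu⁻¹.toReal)) *
          (ENNReal.ofReal (d ^ (-mu'⁻¹.toReal)) * eLpNorm f mu mes) := by
        gcongr
        · exact eLpNorm_exp_neg_mul_le hd (hmu.trans hmunu)
        · exact eLpNorm_exp_neg_mul_pi_sub_le hd hconj.one_le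
    _ = ENNReal.ofReal (1 * d ^ (-1 + mu⁻¹.toReal - nu⁻¹.toReal)) * eLpNorm f mu mes := by
        rw [← mul_assoc, ← ENNReal.ofReal_mul (by positivity), ← Real.rpow_add hd, hexponent,
          one_mul]
        congr 3; ring
end
end

section
/- For every absolutely continuous y : [0,π] → ℂ², the function W·y is absolutely continuous and satisfies, for a.e. x ∈ [0,π], B·(W y)′(x) + P̂(x)·(W y)(x) = W(x)·(B·y′(x) + P(x)·y(x)) − γ·(W y)(x). -/
open MeasureTheory Complex Filter Finset Set
open scoped ENNReal

noncomputable section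

/-- diag(a, b). -/
def diag2 (a b : ℂ) : Matrix (Fin 2) (Fin 2) ℂ := !![a, 0; 0, b]

/-- γ = (1/(2π))·∫₀^π (p₁(t)+p₄(t)) dt. -/
def gam (p1 p4 : ℝ → ℂ) : ℂ :=
  (1 / (2 * (Real.pi : ℂ))) * ∫ t in (0 : ℝ)..Real.pi, (p1 t + p4 t)

/-- φ(x) = γx − ∫₀^x p₁(t) dt. -/
def phi (p1 p4 : ℝ → ℂ) (x : ℝ) : ℂ :=
  gam p1 p4 * (x : ℂ) - ∫ t in (0 : ℝ)..x, p1 t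

/-- ψ(x) = ∫₀^x p₄(t) dt − γx. -/
def psi (p1 p4 : ℝ → ℂ) (x : ℝ) : ℂ :=
  (∫ t in (0 : ℝ)..x, p4 t) - gam p1 p4 * (x : ℂ)

/-- W(x) = diag(e^{−iφ(x)}, e^{−iψ(x)}). -/
def Wmat (p1 p4 : ℝ → ℂ) (x : ℝ) : Matrix (Fin 2) (Fin 2) ℂ :=
  diag2 (Complex.exp (-(I * phi p1 p4 x))) (Complex.exp (-(I * psi p1 p4 x)))

/-- The potential P(x) = [[p₁(x), p₂(x)], [p₃(x), p₄(x)]]. -/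
def Pmat (p1 p2 p3 p4 : ℝ → ℂ) (x : ℝ) : Matrix (Fin 2) (Fin 2) ℂ :=
  !![p1 x, p2 x; p3 x, p4 x]

/-- The transformed potential
P̂(x) = [[0, p₂(x)·e^{i(ψ(x)−φ(x))}], [p₃(x)·e^{i(φ(x)−ψ(x))}, 0]]. -/
def Phat (p1 p2 p3 p4 : ℝ → ℂ) (x : ℝ) : Matrix (Fin 2) (Fin 2) ℂ :=
  !![0, p2 x * Complex.exp (I * (psi p1 p4 x - phi p1 p4 x));
     p3 x * Complex.exp (I * (phi p1 p4 x - psi p1 p4 x)), 0]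

/-! A function `u x = u 0 + ∫₀ˣ u'` is absolutely continuous, and conversely an absolutely
continuous function with a.e. derivative `u'` has this form, since the difference is absolutely
continuous with a.e. vanishing derivative, hence constant. So the product rule and the chain rule
for `exp`, which hold at almost every point, carry over to such integral representations.
The entries of `W` are exponentials of primitives, with `W′ = W · diag(i(p₁ − γ), −i(p₄ − γ))`,
hence `B W′ = W · (diag(p₁, p₄) − γ)` as `B` and `W` are diagonal. The relation
`e^{i(ψ−φ)} e^{−iψ} = e^{−iφ}` turns `W` times the off-diagonal part of `P` into `P̂ W`, and the
identity holds at every point. -/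

section AbsolutelyContinuous

variable {X Y : Type*} [PseudoMetricSpace X] [PseudoMetricSpace Y] {a b : ℝ}

theorem AbsolutelyContinuousOnInterval.congr {f g : ℝ → X}
    (hf : AbsolutelyContinuousOnInterval f a b) (hfg : EqOn f g (uIcc a b)) :
    AbsolutelyContinuousOnInterval g a b := by
  unfold AbsolutelyContinuousOnInterval at hf ⊢
  refine hf.congr' (eventually_inf_principal.mpr (Eventually.of_forall fun E hE => ?_))
  exact Finset.sum_congr rfl fun i hi => by rw [hfg (hE.1 i hi).1, hfg (hE.1 i hi).2]

theorem AbsolutelyContinuousOnInterval.comp_lipschitzOnWith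
    {f : ℝ → X} {h : X → Y} {s : Set X} {K : NNReal}
    (hf : AbsolutelyContinuousOnInterval f a b) (hh : LipschitzOnWith K h s)
    (hfs : MapsTo f (uIcc a b) s) :
    AbsolutelyContinuousOnInterval (h ∘ f) a b := by
  unfold AbsolutelyContinuousOnInterval at hf ⊢
  refine squeeze_zero' (Eventually.of_forall fun _ => Finset.sum_nonneg fun _ _ => dist_nonneg)
    ?_ (by simpa using hf.const_mul (K : ℝ))
  refine eventually_inf_principal.mpr (Eventually.of_forall fun E hE => ?_)
  rw [Finset.mul_sum]
  exact Finset.sum_le_sum fun i hi =>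
    hh.dist_le_mul _ (hfs (hE.1 i hi).1) _ (hfs (hE.1 i hi).2)

variable {E : Type*} [NormedAddCommGroup E]

theorem AbsolutelyContinuousOnInterval.comp_locallyLipschitz {f : ℝ → E} {h : E → Y}
    (hf : AbsolutelyContinuousOnInterval f a b) (hh : LocallyLipschitz h) :
    AbsolutelyContinuousOnInterval (h ∘ f) a b := by
  have hcpt : IsCompact (f '' uIcc a b) := isCompact_uIcc.image_of_continuousOn hf.continuousOn
  obtain ⟨K, hK⟩ := hh.locallyLipschitzOn.exists_lipschitzOnWith_of_compact hcpt
  exact hf.comp_lipschitzOnWith hK (mapsTo_image f _)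

variable [NormedSpace ℝ E]

theorem IntervalIntegrable.absolutelyContinuousOnInterval_primitive {f : ℝ → E} {c : ℝ}
    (hf : IntervalIntegrable f volume a b) (hc : c ∈ uIcc a b) :
    AbsolutelyContinuousOnInterval (fun x => ∫ t in c..x, f t) a b := by
  have hnorm := hf.norm.absolutelyContinuousOnInterval_intervalIntegral hc
  unfold AbsolutelyContinuousOnInterval at hnorm ⊢
  refine squeeze_zero' (Eventually.of_forall fun _ => Finset.sum_nonneg fun _ _ => dist_nonneg)
    (eventually_inf_principal.mpr (Eventually.of_forall fun E hE => ?_)) hnorm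
  refine Finset.sum_le_sum fun i hi => ?_
  have hsub : ∀ {u v}, u ∈ uIcc a b → v ∈ uIcc a b → IntervalIntegrable f volume u v :=
    fun hu hv => hf.mono_set (uIcc_subset_uIcc hu hv)
  have hx := (hE.1 i hi).1
  have hy := (hE.1 i hi).2
  rw [dist_eq_norm, dist_eq_norm, intervalIntegral.integral_interval_sub_left (hsub hc hx)
    (hsub hc hy), intervalIntegral.integral_interval_sub_left (hsub hc hx).norm
    (hsub hc hy).norm, Real.norm_eq_abs]
  exact intervalIntegral.norm_integral_le_abs_integral_norm

variable [CompleteSpace E]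

theorem AbsolutelyContinuousOnInterval.eq_add_integral_of_ae_hasDerivAt {F f : ℝ → E}
    (hF : AbsolutelyContinuousOnInterval F a b) (hf : IntervalIntegrable f volume a b)
    (hderiv : ∀ᵐ x, x ∈ uIcc a b → HasDerivAt F (f x) x) :
    ∀ x ∈ uIcc a b, F x = F a + ∫ t in a..x, f t := by
  obtain ⟨C, hC⟩ := (hF.sub (hf.absolutelyContinuousOnInterval_primitive left_mem_uIcc))
    |>.const_of_ae_hasDerivAt_zero (by
      filter_upwards [hderiv, hf.ae_hasDerivAt_integral] with x hFx hfx hx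
      simpa using (hFx hx).sub (hfx hx a left_mem_uIcc))
  intro x hx
  have hCx : F x - ∫ t in a..x, f t = C := hC x hx
  have hCa : F a - ∫ t in a..a, f t = C := hC a left_mem_uIcc
  rw [intervalIntegral.integral_same, sub_zero] at hCa
  rw [hCa, ← hCx, sub_add_cancel]

end AbsolutelyContinuous

def IsPrimitiveOn {E : Type*} [NormedAddCommGroup E] [NormedSpace ℝ E]
    (u u' : ℝ → E) (b : ℝ) : Prop :=
  IntervalIntegrable u' volume 0 b ∧ ∀ x ∈ Icc 0 b, u x = u 0 + ∫ t in (0 : ℝ)..x, u' t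

namespace IsPrimitiveOn

variable {E : Type*} [NormedAddCommGroup E] [NormedSpace ℝ E] {u u' : ℝ → E} {b : ℝ}

theorem absolutelyContinuousOnInterval (hu : IsPrimitiveOn u u' b) (hb : 0 ≤ b) :
    AbsolutelyContinuousOnInterval u 0 b :=
  ((LipschitzWith.const (u 0)).lipschitzOnWith.absolutelyContinuousOnInterval.add
    (hu.1.absolutelyContinuousOnInterval_primitive left_mem_uIcc)).congr
    fun x hx => (hu.2 x (by rwa [uIcc_of_le hb] at hx)).symm

variable [CompleteSpace E]

theorem ae_hasDerivAt (hu : IsPrimitiveOn u u' b) (hb : 0 ≤ b) :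
    ∀ᵐ x, x ∈ uIcc 0 b → HasDerivAt u (u' x) x := by
  filter_upwards [hu.1.ae_hasDerivAt_integral, Measure.ae_ne volume 0, Measure.ae_ne volume b]
    with x hderiv hx0 hxb hx
  rw [uIcc_of_le hb] at hx
  have hxIoo : x ∈ Ioo 0 b := ⟨hx.1.lt_of_ne' hx0, hx.2.lt_of_ne hxb⟩
  have hprim := (hderiv (by rwa [uIcc_of_le hb]) 0 left_mem_uIcc).const_add (u 0)
  refine hprim.congr_of_eventuallyEq ?_
  filter_upwards [Ioo_mem_nhds hxIoo.1 hxIoo.2] with t ht using hu.2 t (Ioo_subset_Icc_self ht)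

theorem of_absolutelyContinuousOnInterval (hu : AbsolutelyContinuousOnInterval u 0 b)
    (hu' : IntervalIntegrable u' volume 0 b) (hb : 0 ≤ b)
    (hderiv : ∀ᵐ x, x ∈ uIcc 0 b → HasDerivAt u (u' x) x) : IsPrimitiveOn u u' b :=
  ⟨hu', fun x hx => hu.eq_add_integral_of_ae_hasDerivAt hu' hderiv x (by rwa [uIcc_of_le hb])⟩

section Field

variable {𝕜 : Type*} [NormedField 𝕜] [NormedAlgebra ℝ 𝕜] [CompleteSpace 𝕜]
  {u u' v v' : ℝ → 𝕜}

theorem mul (hu : IsPrimitiveOn u u' b) (hv : IsPrimitiveOn v v' b) (hb : 0 ≤ b) :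
    IsPrimitiveOn (fun x => u x * v x) (fun x => u' x * v x + u x * v' x) b := by
  have huc := hu.absolutelyContinuousOnInterval hb
  have hvc := hv.absolutelyContinuousOnInterval hb
  refine of_absolutelyContinuousOnInterval (huc.fun_smul hvc)
    ((hu.1.mul_continuousOn hvc.continuousOn).add (hv.1.continuousOn_mul huc.continuousOn)) hb ?_
  filter_upwards [hu.ae_hasDerivAt hb, hv.ae_hasDerivAt hb] with x hux hvx hx
  exact (hux hx).mul (hvx hx)

end Field

end IsPrimitiveOn

theorem IsPrimitiveOn.cexp {u u' : ℝ → ℂ} {b : ℝ} (hu : IsPrimitiveOn u u' b)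
    (hb : 0 ≤ b) :
    IsPrimitiveOn (fun x => Complex.exp (u x)) (fun x => Complex.exp (u x) * u' x) b := by
  have huc := hu.absolutelyContinuousOnInterval hb
  refine of_absolutelyContinuousOnInterval
    (huc.comp_locallyLipschitz (Complex.contDiff_exp (𝕜 := ℂ) (n := 1)).locallyLipschitz)
    (hu.1.continuousOn_mul (Complex.continuous_exp.comp_continuousOn huc.continuousOn)) hb ?_
  filter_upwards [hu.ae_hasDerivAt hb] with x hux hx
  exact (hux hx).cexp

theorem isPrimitiveOn_const_mul_integral_sub_mul {p : ℝ → ℂ} {b : ℝ} (c γ : ℂ)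
    (hp : IntervalIntegrable p volume 0 b) :
    IsPrimitiveOn (fun x => c * ((∫ t in (0 : ℝ)..x, p t) - γ * x))
      (fun x => c * (p x - γ)) b := by
  refine ⟨(hp.sub intervalIntegrable_const).const_mul c, fun x hx => ?_⟩
  have hpx : IntervalIntegrable p volume 0 x :=
    hp.mono_set (uIcc_subset_uIcc left_mem_uIcc (Icc_subset_uIcc hx))
  rw [intervalIntegral.integral_const_mul,
    intervalIntegral.integral_sub hpx intervalIntegrable_const]
  simp [mul_comm γ]

theorem isPrimitiveOn_cexp_neg_I_mul_phi (p1 p4 : ℝ → ℂ) {b : ℝ} (hb : 0 ≤ b)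
    (hp1 : IntervalIntegrable p1 volume 0 b) :
    IsPrimitiveOn (fun x => Complex.exp (-(I * phi p1 p4 x)))
      (fun x => Complex.exp (-(I * phi p1 p4 x)) * (I * (p1 x - gam p1 p4))) b := by
  have hphi : ∀ x, I * ((∫ t in (0 : ℝ)..x, p1 t) - gam p1 p4 * x) = -(I * phi p1 p4 x) :=
    fun x => by rw [phi]; ring
  simpa only [hphi] using (isPrimitiveOn_const_mul_integral_sub_mul I (gam p1 p4) hp1).cexp hb

theorem isPrimitiveOn_cexp_neg_I_mul_psi (p1 p4 : ℝ → ℂ) {b : ℝ} (hb : 0 ≤ b)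
    (hp4 : IntervalIntegrable p4 volume 0 b) :
    IsPrimitiveOn (fun x => Complex.exp (-(I * psi p1 p4 x)))
      (fun x => Complex.exp (-(I * psi p1 p4 x)) * (-I * (p4 x - gam p1 p4))) b := by
  have hpsi : ∀ x, -I * ((∫ t in (0 : ℝ)..x, p4 t) - gam p1 p4 * x) = -(I * psi p1 p4 x) :=
    fun x => by rw [psi]; ring
  simpa only [hpsi] using (isPrimitiveOn_const_mul_integral_sub_mul (-I) (gam p1 p4) hp4).cexp hb

theorem isAC_iff (y g : ℝ → Fin 2 → ℂ) :
    IsAC y g ↔ ∀ i, IsPrimitiveOn (fun x => y x i) (fun x => g x i) Real.pi := by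
  simp only [IsAC, IsPrimitiveOn, funext_iff, Pi.add_apply]
  exact ⟨fun h i => ⟨h.1 i, fun x hx => h.2 x hx i⟩,
    fun h => ⟨fun i => (h i).1, fun x hx i => (h i).2 x hx⟩⟩

theorem diag2_mulVec (a b : ℂ) (v : Fin 2 → ℂ) :
    (diag2 a b).mulVec v = ![a * v 0, b * v 1] := by
  ext i
  fin_cases i <;> simp [diag2, Matrix.mulVec, dotProduct, Fin.sum_univ_two]

section Gauge

variable (p1 p2 p3 p4 : ℝ → ℂ)

def WmatDeriv (x : ℝ) : Matrix (Fin 2) (Fin 2) ℂ :=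
  diag2 (Complex.exp (-(I * phi p1 p4 x)) * (I * (p1 x - gam p1 p4)))
    (Complex.exp (-(I * psi p1 p4 x)) * (-I * (p4 x - gam p1 p4)))

theorem gauge_identity (x : ℝ) (v v' : Fin 2 → ℂ) :
    Bmat.mulVec ((WmatDeriv p1 p4 x).mulVec v + (Wmat p1 p4 x).mulVec v') +
        (Phat p1 p2 p3 p4 x).mulVec ((Wmat p1 p4 x).mulVec v) =
      (Wmat p1 p4 x).mulVec (Bmat.mulVec v' + (Pmat p1 p2 p3 p4 x).mulVec v) -
        gam p1 p4 • (Wmat p1 p4 x).mulVec v := by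
  have h0 : Complex.exp (I * (psi p1 p4 x - phi p1 p4 x)) * Complex.exp (-(I * psi p1 p4 x))
      = Complex.exp (-(I * phi p1 p4 x)) := by rw [← Complex.exp_add]; ring_nf
  have h1 : Complex.exp (I * (phi p1 p4 x - psi p1 p4 x)) * Complex.exp (-(I * phi p1 p4 x))
      = Complex.exp (-(I * psi p1 p4 x)) := by rw [← Complex.exp_add]; ring_nf
  simp only [Wmat, WmatDeriv, diag2_mulVec]
  ext i
  fin_cases i <;> simp [Bmat, Phat, Pmat, dotProduct, Fin.sum_univ_two]
  · linear_combination (p2 x * v 1) * h0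
      - ((p1 x - gam p1 p4) * Complex.exp (-(I * phi p1 p4 x)) * v 0) * Complex.I_sq
  · linear_combination (p3 x * v 0) * h1
      - ((p4 x - gam p1 p4) * Complex.exp (-(I * psi p1 p4 x)) * v 1) * Complex.I_sq

end Gauge

/-- for every absolutely continuous y : [0,π] → ℂ², the function W·y is
absolutely continuous and satisfies, for a.e. x ∈ [0,π],
B·(Wy)′(x) + P̂(x)·(Wy)(x) = W(x)·(B·y′(x) + P(x)·y(x)) − γ·(Wy)(x). -/
theorem gauge_transform_ode (p1 p2 p3 p4 : ℝ → ℂ)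
    (hp : ∀ p ∈ [p1, p2, p3, p4],
      MeasureTheory.IntegrableOn p (Set.Icc (0 : ℝ) Real.pi)) :
    ∀ y g : ℝ → Fin 2 → ℂ, IsAC y g →
      ∃ h : ℝ → Fin 2 → ℂ,
        IsAC (fun x => (Wmat p1 p4 x).mulVec (y x)) h ∧
        ∀ᵐ x ∂mes,
          Bmat.mulVec (h x) +
              (Phat p1 p2 p3 p4 x).mulVec ((Wmat p1 p4 x).mulVec (y x)) =
            (Wmat p1 p4 x).mulVec (Bmat.mulVec (g x) + (Pmat p1 p2 p3 p4 x).mulVec (y x)) -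
              gam p1 p4 • (Wmat p1 p4 x).mulVec (y x) := by
  intro y g hy
  have hπ : 0 ≤ Real.pi := Real.pi_pos.le
  have hint : ∀ p ∈ [p1, p2, p3, p4], IntervalIntegrable p volume 0 Real.pi := fun p hp' =>
    (intervalIntegrable_iff_integrableOn_Icc_of_le hπ).2 (hp p hp')
  have hw1 := isPrimitiveOn_cexp_neg_I_mul_phi p1 p4 hπ (hint p1 (by simp))
  have hw2 := isPrimitiveOn_cexp_neg_I_mul_psi p1 p4 hπ (hint p4 (by simp))
  rw [isAC_iff] at hy
  refine ⟨fun x => (WmatDeriv p1 p4 x).mulVec (y x) + (Wmat p1 p4 x).mulVec (g x), ?_,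
    Eventually.of_forall fun x => gauge_identity p1 p2 p3 p4 x (y x) (g x)⟩
  rw [isAC_iff]
  simp only [Wmat, WmatDeriv, diag2_mulVec]
  intro i
  fin_cases i
  · simpa using hw1.mul (hy 0) hπ
  · simpa using hw2.mul (hy 1) hπ

end
end
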